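/- arXiv:2412.03908 — 2 statements merged into one kernel-verified Lean document; each statement's English description precedes it below -/
import Mathlib

section
/- Let g_t, g_our, g_cos be vectors in a real inner product space with g_our ≠ g_cos, and let g(x) = g_t + δ for some vector δ satisfying ‖δ‖ < ⟨g_t, g_our − g_cos⟩ / ‖g_our − g_cos‖. Then ⟨g(x), g_our⟩ > ⟨g(x), g_cos⟩. -/
open RealInnerProductSpace

theorem stmt_2 {E : Type*} [NormedAddCommGroup E] [InnerProductSpace ℝ E]
    (g_t g_our g_cos δ : E) (hne : g_our ≠ g_cos)
    (hδ : ‖δ‖ < ⟪g_t, g_our - g_cos⟫ / ‖g_our - g_cos‖) :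
    ⟪g_t + δ, g_our⟫ > ⟪g_t + δ, g_cos⟫ := by
  have hd : (0:ℝ) < ‖g_our - g_cos‖ := by
    simpa [sub_eq_zero] using (norm_pos_iff.mpr (sub_ne_zero.mpr hne))
  have h1 : ‖δ‖ * ‖g_our - g_cos‖ < ⟪g_t, g_our - g_cos⟫ := by
    have := (lt_div_iff₀ hd).mp hδ
    linarith
  have h2 : ⟪δ, g_our - g_cos⟫ ≥ -(‖δ‖ * ‖g_our - g_cos‖) := by
    have := abs_real_inner_le_norm δ (g_our - g_cos)
    cases abs_le.mp this with
    | intro hl hr => linarith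
  have h3 : (0:ℝ) < ⟪g_t + δ, g_our - g_cos⟫ := by
    rw [inner_add_left]
    linarith
  rw [inner_sub_right] at h3
  linarith
end

section
/- Let g_t, g_our, g_cos be vectors in a real inner product space and c ∈ (0, 1] with ⟨g_t, g_our⟩ = c·‖g_t‖·‖g_our‖, ⟨g_t, g_cos⟩ = c·‖g_t‖·‖g_cos‖, ‖g_t − g_our‖ < ‖g_t − g_cos‖, and ‖g_cos‖ < c·‖g_t‖. Then ‖g_our‖ > ‖g_cos‖. -/
open RealInnerProductSpace

theorem stmt_3 {E : Type*} [NormedAddCommGroup E] [InnerProductSpace ℝ E]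
    (g_t g_our g_cos : E) (c : ℝ) (hc : c ∈ Set.Ioc (0 : ℝ) 1)
    (h1 : ⟪g_t, g_our⟫ = c * ‖g_t‖ * ‖g_our‖)
    (h2 : ⟪g_t, g_cos⟫ = c * ‖g_t‖ * ‖g_cos‖)
    (h3 : ‖g_t - g_our‖ < ‖g_t - g_cos‖)
    (h4 : ‖g_cos‖ < c * ‖g_t‖) :
    ‖g_our‖ > ‖g_cos‖ := by
  have e1 := @norm_sub_sq_real E _ _ g_t g_our
  have e2 := @norm_sub_sq_real E _ _ g_t g_cos
  rw [h1] at e1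
  rw [h2] at e2
  have h3' : ‖g_t - g_our‖ ^ 2 < ‖g_t - g_cos‖ ^ 2 := by
    exact pow_lt_pow_left₀ h3 (norm_nonneg _) two_ne_zero
  rw [e1, e2] at h3'
  nlinarith [norm_nonneg g_our, norm_nonneg g_cos]
end
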